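/- For a statistical structure (g,K) on a manifold, the following are equivalent: (1) R = R̄ (the curvature tensors of the conjugate connections ∇ = ∇̂ + K and ∇̄ = ∇̂ - K coincide); (2) ∇̂K is totally symmetric; (3) g(R(X,Y)Z,W) is skew-symmetric in (Z,W). -/
import Mathlib


open RealInnerProductSpace

/-- The curvature tensor `R` of the statistical connection `∇ = ∇̂ + K`, built
from the Riemannian curvature `R̂`, the covariant derivative `DK = ∇̂K`, and the
commutator `[K_X, K_Y]` via Gauss-type equation
`R(X,Y)Z = R̂(X,Y)Z + (∇̂_X K)(Y,Z) - (∇̂_Y K)(X,Z) + [K_X,K_Y]Z`. -/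
def statCurv {V : Type*} [NormedAddCommGroup V] [InnerProductSpace ℝ V]
    (Rhat : V →ₗ[ℝ] V →ₗ[ℝ] V →ₗ[ℝ] V)
    (DK : V →ₗ[ℝ] V →ₗ[ℝ] V →ₗ[ℝ] V)
    (K : V →ₗ[ℝ] V →ₗ[ℝ] V) (X Y Z : V) : V :=
  Rhat X Y Z + DK X Y Z - DK Y X Z + (K X (K Y Z) - K Y (K X Z))

/-- For a statistical structure, with `R` and `R̄` the curvature tensors of the
conjugate connections `∇ = ∇̂ + K` and `∇̄ = ∇̂ - K`, the following are
equivalent: (1) `R = R̄`; (2) `∇̂K` is (totally) symmetric; (3) `g(R(X,Y)Z,W)` is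
skew-symmetric in `(Z,W)`. (The curvatures of `∇̂ ± K` are expressed pointwise by
`R(X,Y) = R̂(X,Y) ± ((∇̂_X K)_Y - (∇̂_Y K)_X) + [K_X,K_Y]`, where `R̂(X,Y)` is
skew-adjoint, each `K_X` and each `(∇̂_X K)_Y` is self-adjoint.) -/
theorem statistical_curvature_tfae
    {V : Type*} [NormedAddCommGroup V] [InnerProductSpace ℝ V]
    (K : V →ₗ[ℝ] V →ₗ[ℝ] V)
    (hsymm : ∀ X Y : V, K X Y = K Y X)
    (hadj : ∀ X Y Z : V, ⟪K X Y, Z⟫ = ⟪Y, K X Z⟫)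
    (Rhat : V →ₗ[ℝ] V →ₗ[ℝ] V →ₗ[ℝ] V)
    (hRhatSkew : ∀ X Y Z W : V, ⟪Rhat X Y Z, W⟫ = -⟪Rhat X Y W, Z⟫)
    (DK : V →ₗ[ℝ] V →ₗ[ℝ] V →ₗ[ℝ] V)
    (hDKsym : ∀ X Y Z : V, DK X Y Z = DK X Z Y)
    (hDKadj : ∀ X Y Z W : V, ⟪DK X Y Z, W⟫ = ⟪Z, DK X Y W⟫) :
    ((∀ X Y Z : V, statCurv Rhat DK K X Y Z = statCurv Rhat (-DK) K X Y Z) ↔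
        (∀ X Y Z : V, DK X Y Z = DK Y X Z)) ∧
    ((∀ X Y Z : V, statCurv Rhat DK K X Y Z = statCurv Rhat (-DK) K X Y Z) ↔
        (∀ X Y Z W : V,
          ⟪statCurv Rhat DK K X Y Z, W⟫ = -⟪statCurv Rhat DK K X Y W, Z⟫)) := by

  have h1 : (∀ X Y Z : V, statCurv Rhat DK K X Y Z = statCurv Rhat (-DK) K X Y Z) ↔
      (∀ X Y Z : V, DK X Y Z = DK Y X Z) := by
    constructor
    · intro h X Y Z
      have he := h X Y Z
      simp only [statCurv, LinearMap.neg_apply] at he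
      have h2 : (2:ℝ) • (DK X Y Z - DK Y X Z) = 0 := by
        linear_combination (norm := module) he
      have := smul_eq_zero.mp h2
      simpa [sub_eq_zero] using this.resolve_left (by norm_num)
    · intro h X Y Z
      simp only [statCurv, LinearMap.neg_apply, h X Y Z]
      abel
  have h2 : (∀ X Y Z : V, DK X Y Z = DK Y X Z) ↔
      (∀ X Y Z W : V,
        ⟪statCurv Rhat DK K X Y Z, W⟫ = -⟪statCurv Rhat DK K X Y W, Z⟫) := by
    constructor
    · intro h X Y Z W
      simp only [statCurv, inner_add_left, inner_sub_left]
      have e1 : ⟪K X (K Y Z), W⟫ = ⟪Z, K Y (K X W)⟫ :=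
        (hadj X (K Y Z) W).trans (hadj Y Z (K X W))
      have e2 : ⟪K Y (K X Z), W⟫ = ⟪Z, K X (K Y W)⟫ :=
        (hadj Y (K X Z) W).trans (hadj X Z (K Y W))
      have ha : ⟪DK X Y Z, W⟫ = ⟪DK Y X Z, W⟫ := by rw [h X Y Z]
      linarith [hRhatSkew X Y Z W, e1, e2,
        real_inner_comm Z (K Y (K X W)), real_inner_comm Z (K X (K Y W)),
        hDKadj X Y W Z, real_inner_comm (DK X Y Z) W,
        hDKadj Y X W Z, real_inner_comm (DK Y X Z) W, ha]
    · intro h X Y Z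
      rw [← sub_eq_zero, ← inner_self_eq_zero (𝕜 := ℝ)]
      set W := DK X Y Z - DK Y X Z with hW
      have hs := h X Y Z W
      simp only [statCurv, inner_add_left, inner_sub_left] at hs
      have e1 : ⟪K X (K Y Z), W⟫ = ⟪Z, K Y (K X W)⟫ :=
        (hadj X (K Y Z) W).trans (hadj Y Z (K X W))
      have e2 : ⟪K Y (K X Z), W⟫ = ⟪Z, K X (K Y W)⟫ :=
        (hadj Y (K X Z) W).trans (hadj X Z (K Y W))
      have key : (2:ℝ) * ⟪DK X Y Z - DK Y X Z, W⟫ = 0 := by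
        simp only [inner_sub_left]
        linarith [hs, hRhatSkew X Y Z W, e1, e2,
          real_inner_comm Z (K Y (K X W)), real_inner_comm Z (K X (K Y W)),
          hDKadj X Y W Z, real_inner_comm (DK X Y Z) W,
          hDKadj Y X W Z, real_inner_comm (DK Y X Z) W]
      have := mul_eq_zero.mp key
      simpa [hW] using this.resolve_left (by norm_num)
  exact ⟨h1, h1.trans h2⟩
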